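/- arXiv:2309.15365 — 2 statements merged into one kernel-verified Lean document; each statement's English description precedes it below -/
import Mathlib

section
/- There exist two connected simple graphs G and H on the vertex set Fin 5 that are not isomorphic and whose signless Laplacian matrices Q(G) = deg(G) + A(G) and Q(H) = deg(H) + A(H) have equal characteristic polynomials. -/
open Matrix

noncomputable section

open scoped Classical

/-- Adjacency matrix of a simple graph on `Fin n`, over `ℤ`. -/
def adjMat {n : ℕ} (G : SimpleGraph (Fin n)) : Matrix (Fin n) (Fin n) ℤ :=
  Matrix.of fun u v => if G.Adj u v then 1 else 0

/-- Degree matrix: diagonal matrix of vertex degrees. -/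
def degMat {n : ℕ} (G : SimpleGraph (Fin n)) : Matrix (Fin n) (Fin n) ℤ :=
  Matrix.diagonal fun v => ∑ u, if G.Adj v u then (1 : ℤ) else 0

/-- Laplacian matrix `L(G) = deg(G) - A(G)`. -/
def lapMat {n : ℕ} (G : SimpleGraph (Fin n)) : Matrix (Fin n) (Fin n) ℤ :=
  degMat G - adjMat G

/-- Distance matrix: `(u,v)`-entry is the graph distance between `u` and `v`. -/
def distMat {n : ℕ} (G : SimpleGraph (Fin n)) : Matrix (Fin n) (Fin n) ℤ :=
  Matrix.of fun u v => (G.dist u v : ℤ)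

/-- Transmission matrix: diagonal matrix of vertex transmissions. -/
def trMat {n : ℕ} (G : SimpleGraph (Fin n)) : Matrix (Fin n) (Fin n) ℤ :=
  Matrix.diagonal fun u => ∑ v, (G.dist u v : ℤ)

/-- Distance Laplacian matrix `D^L(G) = tr(G) - D(G)`. -/
def distLap {n : ℕ} (G : SimpleGraph (Fin n)) : Matrix (Fin n) (Fin n) ℤ :=
  trMat G - distMat G

/-- Walk-type matrix of `M`: the `j`-th column is `M^j · e`, `e` the all-ones vector. -/
def walkMat {n : ℕ} (M : Matrix (Fin n) (Fin n) ℤ) : Matrix (Fin n) (Fin n) ℤ :=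
  Matrix.of fun i j => (M ^ (j : ℕ)).mulVec 1 i

/-- Two integer matrices are equivalent over `ℤ` if `N = P·M·Q` with `P, Q ∈ GL_n(ℤ)`. -/
def ZEquiv {n : ℕ} (M N : Matrix (Fin n) (Fin n) ℤ) : Prop :=
  ∃ P Q : Matrix.GeneralLinearGroup (Fin n) ℤ,
    N = (P : Matrix (Fin n) (Fin n) ℤ) * M * (Q : Matrix (Fin n) (Fin n) ℤ)

set_option maxRecDepth 40000
set_option maxHeartbeats 1000000

/-- Adjacency of graph G6a: edges 01,02,03,04,12,13,14. -/
def fG6 : Fin 5 → Fin 5 → Bool := fun u v =>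
  (min u v, max u v) ∈ [((0:Fin 5),(1:Fin 5)),(0,2),(0,3),(0,4),(1,2),(1,3),(1,4)]

/-- Adjacency of graph H6a: edges 01,02,03,04,12,13,23. -/
def fH6 : Fin 5 → Fin 5 → Bool := fun u v =>
  (min u v, max u v) ∈ [((0:Fin 5),(1:Fin 5)),(0,2),(0,3),(0,4),(1,2),(1,3),(2,3)]

def G6 : SimpleGraph (Fin 5) where
  Adj u v := fG6 u v
  symm := ⟨by intro u v; revert u v; decide⟩
  loopless := ⟨by intro u; revert u; decide⟩

def H6 : SimpleGraph (Fin 5) where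
  Adj u v := fH6 u v
  symm := ⟨by intro u v; revert u v; decide⟩
  loopless := ⟨by intro u; revert u; decide⟩

instance : DecidableRel G6.Adj := fun u v => inferInstanceAs (Decidable (fG6 u v = true))
instance : DecidableRel H6.Adj := fun u v => inferInstanceAs (Decidable (fH6 u v = true))

lemma eval_cp5 (M : Matrix (Fin 5) (Fin 5) ℤ) (r : ℤ) :
    M.charpoly.eval r = (Matrix.of fun i j => (if i = j then r else 0) - M i j).det := by
  rw [Matrix.charpoly, ← Polynomial.coe_evalRingHom, RingHom.map_det]
  congr 1; ext i j
  by_cases h : i = j <;>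
    simp [Matrix.charmatrix_apply, h, Matrix.diagonal, Matrix.one_apply]

theorem stmt6 :
    ∃ G H : SimpleGraph (Fin 5), G.Connected ∧ H.Connected ∧
      ¬ Nonempty (G ≃g H) ∧
      (degMat G + adjMat G).charpoly = (degMat H + adjMat H).charpoly := by
  refine ⟨G6, H6, ?_, ?_, ?_, ?_⟩
  · rw [SimpleGraph.connected_iff]; exact ⟨by decide, ⟨0⟩⟩
  · rw [SimpleGraph.connected_iff]; exact ⟨by decide, ⟨0⟩⟩
  · rintro ⟨φ⟩
    have hdeg : ∀ v, G6.degree v = H6.degree (φ v) := fun v => by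
      rw [← SimpleGraph.card_neighborSet_eq_degree, ← SimpleGraph.card_neighborSet_eq_degree]
      exact Fintype.card_congr (φ.mapNeighborSet v)
    have h1 : H6.degree 4 = 1 := by decide
    have h2 : ∀ v, G6.degree v ≠ 1 := by decide
    have := hdeg (φ.symm 4)
    rw [RelIso.apply_symm_apply, h1] at this
    exact h2 _ this
  · have hQG : degMat G6 + adjMat G6 =
        !![4,1,1,1,1; 1,4,1,1,1; 1,1,2,0,0; 1,1,0,2,0; 1,1,0,0,2] := by
      ext i j
      fin_cases i <;> fin_cases j <;>
        simp [degMat, adjMat, Matrix.diagonal, Fin.sum_univ_five, G6, fG6] <;> decide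
    have hQH : degMat H6 + adjMat H6 =
        !![4,1,1,1,1; 1,3,1,1,0; 1,1,3,1,0; 1,1,1,3,0; 1,0,0,0,1] := by
      ext i j
      fin_cases i <;> fin_cases j <;>
        simp [degMat, adjMat, Matrix.diagonal, Fin.sum_univ_five, H6, fH6] <;> decide
    rw [hQG, hQH]
    set A : Matrix (Fin 5) (Fin 5) ℤ :=
      !![4,1,1,1,1; 1,4,1,1,1; 1,1,2,0,0; 1,1,0,2,0; 1,1,0,0,2] with hA
    set B : Matrix (Fin 5) (Fin 5) ℤ :=
      !![4,1,1,1,1; 1,3,1,1,0; 1,1,3,1,0; 1,1,1,3,0; 1,0,0,0,1] with hB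
    have hsub : A.charpoly - B.charpoly = 0 := by
      apply Polynomial.eq_zero_of_natDegree_lt_card_of_eval_eq_zero' _
        ({0,1,2,3,4,5} : Finset ℤ)
      · intro i hi
        rw [Polynomial.eval_sub, eval_cp5, eval_cp5, sub_eq_zero, hA, hB]
        fin_cases hi <;> decide
      · calc (A.charpoly - B.charpoly).natDegree
            ≤ max A.charpoly.natDegree B.charpoly.natDegree :=
              Polynomial.natDegree_sub_le _ _
          _ < 6 := by
              rw [Matrix.charpoly_natDegree_eq_dim, Matrix.charpoly_natDegree_eq_dim]
              simp
          _ ≤ _ := by decide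
    exact sub_eq_zero.mp hsub
end
end

section
/- There exist two connected simple graphs G and H on the vertex set Fin 5 that are not isomorphic and whose transmission-adjacency matrices A^tr(G) = tr(G) − A(G) and A^tr(H) = tr(H) − A(H) have equal characteristic polynomials. -/
open Matrix

noncomputable section

open scoped Classical

/-! ### Auxiliary material -/

def gL : List (ℕ × ℕ) := [(0,1),(0,2),(0,3),(0,4),(1,2),(1,3),(1,4),
    (1,0),(2,0),(3,0),(4,0),(2,1),(3,1),(4,1)]
def hL : List (ℕ × ℕ) := [(0,1),(0,2),(0,3),(0,4),(1,2),(1,3),(2,3),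
    (1,0),(2,0),(3,0),(4,0),(2,1),(3,1),(3,2)]

def myG : SimpleGraph (Fin 5) where
  Adj u v := (u.val, v.val) ∈ gL
  symm := by constructor; intro u v h; revert h; revert u v; decide
  loopless := by constructor; intro u h; revert h; revert u; decide

def myH : SimpleGraph (Fin 5) where
  Adj u v := (u.val, v.val) ∈ hL
  symm := by constructor; intro u v h; revert h; revert u v; decide
  loopless := by constructor; intro u h; revert h; revert u; decide

instance myGdec : DecidableRel myG.Adj :=
  fun u v => by unfold myG; exact List.instDecidableMemOfLawfulBEq _ _
instance myHdec : DecidableRel myH.Adj :=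
  fun u v => by unfold myH; exact List.instDecidableMemOfLawfulBEq _ _

lemma conn_of_hub {n : ℕ} (G : SimpleGraph (Fin (n+1))) (w : Fin (n+1))
    (h : ∀ v, v ≠ w → G.Adj w v) : G.Connected := by
  rw [SimpleGraph.connected_iff]
  refine ⟨fun u v => ?_, ⟨w⟩⟩
  have key : ∀ x, G.Reachable w x := fun x => by
    by_cases hx : x = w
    · subst hx; rfl
    · exact (h x hx).reachable
  exact (key u).symm.trans (key v)

lemma dist_two {V : Type*} (G : SimpleGraph V) {u v : V} (w : V) (hne : u ≠ v)
    (hna : ¬ G.Adj u v) (h1 : G.Adj u w) (h2 : G.Adj w v) : G.dist u v = 2 := by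
  have hle : G.dist u v ≤ 2 := by
    have := SimpleGraph.dist_le (SimpleGraph.Walk.cons h1 h2.toWalk)
    simpa using this
  have h0 : G.dist u v ≠ 0 := by
    intro h
    rcases SimpleGraph.dist_eq_zero_iff_eq_or_not_reachable.mp h with rfl | hnr
    · exact hne rfl
    · exact hnr ⟨SimpleGraph.Walk.cons h1 h2.toWalk⟩
  have h1' : G.dist u v ≠ 1 := fun h => hna (SimpleGraph.dist_eq_one_iff_adj.mp h)
  omega

def dg : Fin 5 → Fin 5 → ℕ :=
  ![![0,1,1,1,1],![1,0,1,1,1],![1,1,0,2,2],![1,1,2,0,2],![1,1,2,2,0]]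
def dh : Fin 5 → Fin 5 → ℕ :=
  ![![0,1,1,1,1],![1,0,1,1,2],![1,1,0,1,2],![1,1,1,0,2],![1,2,2,2,0]]

lemma distGeq : ∀ u v, myG.dist u v = dg u v := by
  intro u v
  fin_cases u <;> fin_cases v <;>
    first
      | exact SimpleGraph.dist_eq_one_iff_adj.mpr (by decide)
      | exact dist_two myG 0 (by decide) (by decide) (by decide) (by decide)
      | simp [dg]

lemma distHeq : ∀ u v, myH.dist u v = dh u v := by
  intro u v
  fin_cases u <;> fin_cases v <;>
    first
      | exact SimpleGraph.dist_eq_one_iff_adj.mpr (by decide)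
      | exact dist_two myH 0 (by decide) (by decide) (by decide) (by decide)
      | simp [dh]

def Mg : Matrix (Fin 5) (Fin 5) ℤ :=
  !![4,-1,-1,-1,-1; -1,4,-1,-1,-1; -1,-1,6,0,0; -1,-1,0,6,0; -1,-1,0,0,6]
def Mh : Matrix (Fin 5) (Fin 5) ℤ :=
  !![4,-1,-1,-1,-1; -1,5,-1,-1,0; -1,-1,5,-1,0; -1,-1,-1,5,0; -1,0,0,0,7]

lemma trGeq : trMat myG = Matrix.diagonal ![4,4,6,6,6] := by
  unfold trMat
  have h : (fun u : Fin 5 => ∑ v, (myG.dist u v : ℤ)) = ![4,4,6,6,6] := by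
    funext u
    rw [Fin.sum_univ_five]
    fin_cases u <;> simp [distGeq, dg, Matrix.vecHead, Matrix.vecTail]
  rw [h]

lemma trHeq : trMat myH = Matrix.diagonal ![4,5,5,5,7] := by
  unfold trMat
  have h : (fun u : Fin 5 => ∑ v, (myH.dist u v : ℤ)) = ![4,5,5,5,7] := by
    funext u
    rw [Fin.sum_univ_five]
    fin_cases u <;> simp [distHeq, dh, Matrix.vecHead, Matrix.vecTail]
  rw [h]

lemma adjGeq : adjMat myG = !![0,1,1,1,1; 1,0,1,1,1; 1,1,0,0,0; 1,1,0,0,0; 1,1,0,0,0] := by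
  ext u v
  fin_cases u <;> fin_cases v <;> simp [adjMat, myG, gL]
  all_goals decide

lemma adjHeq : adjMat myH = !![0,1,1,1,1; 1,0,1,1,0; 1,1,0,1,0; 1,1,1,0,0; 1,0,0,0,0] := by
  ext u v
  fin_cases u <;> fin_cases v <;> simp [adjMat, myH, hL]
  all_goals decide

set_option maxRecDepth 100000 in
lemma MgEq : trMat myG - adjMat myG = Mg := by
  rw [trGeq, adjGeq]; unfold Mg; decide

set_option maxRecDepth 100000 in
lemma MhEq : trMat myH - adjMat myH = Mh := by
  rw [trHeq, adjHeq]; unfold Mh; decide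

lemma eval_cp {n : ℕ} (M : Matrix (Fin n) (Fin n) ℤ) (r : ℤ) :
    (M.charpoly).eval r = (Matrix.diagonal (fun _ => r) - M).det := by
  rw [Matrix.charpoly, ← Polynomial.coe_evalRingHom, RingHom.map_det]
  congr 1
  ext i j
  by_cases h : i = j <;>
    simp [h, Matrix.charmatrix_apply_eq, Matrix.charmatrix_apply_ne,
      Matrix.sub_apply, Matrix.diagonal_apply]

set_option maxRecDepth 2000000 in
lemma cpEq : Mg.charpoly = Mh.charpoly := by
  have h : Mg.charpoly - Mh.charpoly = 0 := by
    apply Polynomial.eq_zero_of_natDegree_lt_card_of_eval_eq_zero' _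
      ({0, 1, 2, 3, 4, 5} : Finset ℤ)
    · intro i hi
      fin_cases hi <;>
        · rw [Polynomial.eval_sub, eval_cp, eval_cp]
          decide
    · have h1 : (Mg.charpoly - Mh.charpoly).natDegree ≤ 5 :=
        le_trans (Polynomial.natDegree_sub_le _ _)
          (by simp [Matrix.charpoly_natDegree_eq_dim])
      have h2 : ({0, 1, 2, 3, 4, 5} : Finset ℤ).card = 6 := by decide
      omega
  exact sub_eq_zero.mp h

theorem stmt8 :
    ∃ G H : SimpleGraph (Fin 5), G.Connected ∧ H.Connected ∧
      ¬ Nonempty (G ≃g H) ∧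
      (trMat G - adjMat G).charpoly = (trMat H - adjMat H).charpoly := by
  refine ⟨myG, myH, conn_of_hub myG 0 (by decide), conn_of_hub myH 0 (by decide), ?_, ?_⟩
  · rintro ⟨f⟩
    have key : ¬ ∃ e : Fin 5 ≃ Fin 5, ∀ u v, myG.Adj u v ↔ myH.Adj (e u) (e v) := by
      set_option maxRecDepth 100000 in decide
    exact key ⟨f.toEquiv, fun u v => (f.map_adj_iff).symm⟩
  · rw [MgEq, MhEq]
    exact cpEq
end
end
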